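/- Let k be a perfect field of characteristic p, K = Frac(k[[t_1,...,t_n]]), and T a new indeterminate. Extend the Frobenius F to K((T)) by F(T) = T^p. Then for any f ∈ k[[t_1,...,t_n]], the family (t^r (f+T)^s) indexed by (r,s) ∈ {0,...,p-1}^{n+1} is a basis of K((T)) as a vector space over K((T))^{<p>} = F(K((T))). -/

import Mathlib

/-!
In characteristic `p` the Frobenius `F` of the statement is just `x ↦ x ^ p`, on `k⟦t⟧`, on `K`
and on `K⸨T⸩`, so the claim is that `t^r (f + T)^s` is a basis of `K⸨T⸩` over `K⸨T⸩^p`.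

Since `k` is perfect, sorting the exponents of a power series by their residues mod `p` shows
that the monomials `t^r`, `0 ≤ r_i < p`, form a `p`-basis of `k⟦t⟧`; writing
`a / s = a s^(p-1) / s^p` they stay a `p`-basis of `K`. Sorting the exponents of `T` by their
residues mod `p` in the same way, the `t^r T^s` form a `p`-basis of `K⸨T⸩`. Finally, expanding
`T^s = ((f + T) - f)^s` binomially puts every `t^r T^s` in the `K⸨T⸩^p`-span of the `t^r (f+T)^i`
(the coefficients lie in `K`, which is spanned by the `t^r`), and both families have `p^(n+1)`
elements.
-/

set_option synthInstance.maxHeartbeats 1000000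

open scoped Classical

/-- The Frobenius on multivariate power series: `Σ a_i t^i ↦ Σ a_i^p t^{p·i}`. -/
noncomputable def frobMv {n : ℕ} {k : Type*} [CommSemiring k] (p : ℕ)
    (g : MvPowerSeries (Fin n) k) : MvPowerSeries (Fin n) k :=
  fun i => if ∀ j, p ∣ i j then
    (MvPowerSeries.coeff (Finsupp.mapRange (· / p) (Nat.zero_div p) i) g) ^ p else 0

theorem PowerSeries.coeff_pow_expChar {R : Type*} [CommRing R] (p : ℕ) [ExpChar R p]
    (φ : PowerSeries R) (n : ℕ) :
    PowerSeries.coeff n (φ ^ p) = if p ∣ n then PowerSeries.coeff (n / p) φ ^ p else 0 := by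
  have hp := expChar_ne_zero R p
  rw [← MvPowerSeries.map_frobenius_expand p hp (f := φ)]
  change PowerSeries.coeff n (PowerSeries.map (frobenius R p) (PowerSeries.expand p hp φ)) = _
  rw [PowerSeries.coeff_map, PowerSeries.coeff_expand]
  split_ifs <;> simp [frobenius_def, zero_pow hp]

theorem frobMv_eq_pow {n : ℕ} {R : Type*} [CommRing R] (p : ℕ) [ExpChar R p]
    (g : MvPowerSeries (Fin n) R) : frobMv p g = g ^ p := by
  have hp := expChar_ne_zero R p
  rw [← MvPowerSeries.map_frobenius_expand p hp (f := g)]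
  ext i
  rw [MvPowerSeries.coeff_map, frobenius_def, MvPowerSeries.coeff_apply (frobMv p g)]
  unfold frobMv
  split_ifs with h
  · obtain ⟨m, rfl⟩ : ∃ m, p • m = i :=
      ⟨i.mapRange (· / p) (Nat.zero_div p), by ext s; simp [Nat.mul_div_cancel' (h s)]⟩
    rw [MvPowerSeries.coeff_expand_smul]
    congr 3
    ext s
    simp [Nat.mul_div_cancel_left _ (Nat.pos_of_ne_zero hp)]
  · obtain ⟨s, hs⟩ := not_forall.mp h
    rw [MvPowerSeries.coeff_expand_of_not_dvd p hp g hs, zero_pow hp]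

theorem PowerSeries.coeff_coe_pow_expChar {R : Type*} [CommRing R] (p : ℕ) [ExpChar R p]
    (ψ : PowerSeries R) (m : ℤ) :
    ((ψ : LaurentSeries R) ^ p).coeff m =
      if (p : ℤ) ∣ m then (ψ : LaurentSeries R).coeff (m / p) ^ p else 0 := by
  have hp := expChar_ne_zero R p
  rw [← map_pow]
  rcases lt_or_ge m 0 with hm | hm
  · have hmp : m / p < 0 :=
      Int.ediv_neg_of_neg_of_pos hm (by exact_mod_cast Nat.pos_of_ne_zero hp)
    rw [PowerSeries.coeff_coe, if_pos hm, PowerSeries.coeff_coe, if_pos hmp, zero_pow hp, ite_self]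
  · lift m to ℕ using hm
    simp only [LaurentSeries.coeff_coe_powerSeries, PowerSeries.coeff_pow_expChar,
      Int.natCast_dvd_natCast, ← Int.natCast_div]

theorem LaurentSeries.coeff_pow_expChar {K : Type*} [Field K] (p : ℕ) [ExpChar K p]
    (x : LaurentSeries K) (m : ℤ) :
    (x ^ p).coeff m = if (p : ℤ) ∣ m then x.coeff (m / p) ^ p else 0 := by
  have hp : (p : ℤ) ≠ 0 := by exact_mod_cast expChar_ne_zero K p
  set d := x.order
  set ψ := x.powerSeriesPart
  have hx : x = HahnSeries.single d 1 * (ψ : LaurentSeries K) :=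
    x.single_order_mul_powerSeriesPart.symm
  have hxp : x ^ p = HahnSeries.single (p * d) 1 * (ψ : LaurentSeries K) ^ p := by
    rw [hx, mul_pow, HahnSeries.single_pow, one_pow, nsmul_eq_mul]
  rw [hxp, HahnSeries.coeff_single_mul, one_mul, PowerSeries.coeff_coe_pow_expChar, hx,
    HahnSeries.coeff_single_mul, one_mul,
    show m - p * d = m + (-d) * p by ring, Int.add_mul_ediv_right _ _ hp]
  simp only [dvd_add_left (dvd_mul_left (p : ℤ) (-d)), ← sub_eq_add_neg]

instance LaurentSeries.expChar {R : Type*} [CommRing R] (p : ℕ) [ExpChar R p] :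
    ExpChar (LaurentSeries R) p :=
  expChar_of_injective_ringHom HahnSeries.C_injective p

/-- A finite `p`-basis of `R`, i.e. a basis of `R` over its subring of `p`-th powers, phrased
without that subring: every element of `R` is uniquely of the form `∑ r, b r ^ p * u r`. -/
def IsPBasis (p : ℕ) {ι R : Type*} [Fintype ι] [CommSemiring R] (u : ι → R) : Prop :=
  Function.Bijective fun b : ι → R => ∑ r, b r ^ p * u r

noncomputable def finsuppOfDigits {σ : Type*} [Finite σ] {p : ℕ} (r : σ → Fin p) : σ →₀ ℕ :=
  Finsupp.equivFunOnFinite.symm fun s => r s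

@[simp]
theorem finsuppOfDigits_apply {σ : Type*} [Finite σ] {p : ℕ} (r : σ → Fin p) (s : σ) :
    finsuppOfDigits r s = r s := rfl

theorem Fin.eq_of_dvd_mul_add_sub {p x : ℕ} {a b : Fin p} (hle : (b : ℕ) ≤ p * x + a)
    (hdvd : p ∣ p * x + a - b) : a = b := by
  have hmod := (Nat.modEq_iff_dvd' hle).mpr hdvd
  rw [Nat.ModEq, Nat.mul_add_mod, Nat.mod_eq_of_lt b.isLt, Nat.mod_eq_of_lt a.isLt] at hmod
  exact Fin.ext hmod.symm

theorem exists_nsmul_add_finsuppOfDigits {σ : Type*} [Finite σ] {p : ℕ} [NeZero p]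
    (i : σ →₀ ℕ) : ∃ (r : σ → Fin p) (j : σ →₀ ℕ), p • j + finsuppOfDigits r = i :=
  ⟨fun s => ⟨i s % p, Nat.mod_lt _ (NeZero.pos p)⟩, i.mapRange (· / p) (Nat.zero_div p), by
    ext s; simp [Nat.div_add_mod]⟩

namespace MvPowerSeries

variable {σ R : Type*} [Fintype σ] [CommRing R] (p : ℕ) [ExpChar R p]

theorem coeff_nsmul_add_pow_mul_monomial (b : MvPowerSeries σ R) (r r' : σ → Fin p)
    (j : σ →₀ ℕ) :
    coeff (p • j + finsuppOfDigits r) (b ^ p * monomial (finsuppOfDigits r') 1) =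
      if r' = r then coeff j b ^ p else 0 := by
  have hp := expChar_ne_zero R p
  rw [← map_frobenius_expand p hp (f := b), coeff_mul_monomial, mul_one]
  split_ifs with hle hr hr
  · subst hr
    rw [add_tsub_cancel_right, coeff_map, coeff_expand_smul, frobenius_def]
  · obtain ⟨s, hs⟩ := Function.ne_iff.mp hr
    rw [coeff_map, coeff_expand_of_not_dvd p hp b (i := s), map_zero]
    intro hdvd
    have hle_s := hle s
    simp only [Finsupp.coe_add, Finsupp.coe_smul, Pi.add_apply, Pi.smul_apply, smul_eq_mul,
      finsuppOfDigits_apply] at hle_s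
    simp only [Finsupp.coe_tsub, Finsupp.coe_add, Finsupp.coe_smul, Pi.sub_apply, Pi.add_apply,
      Pi.smul_apply, smul_eq_mul, finsuppOfDigits_apply] at hdvd
    exact hs (Fin.eq_of_dvd_mul_add_sub hle_s hdvd).symm
  · exact absurd (hr ▸ le_add_self) hle
  · rfl

theorem coeff_nsmul_add_sum_pow_mul_monomial [DecidableEq σ]
    (b : (σ → Fin p) → MvPowerSeries σ R) (r : σ → Fin p) (j : σ →₀ ℕ) :
    coeff (p • j + finsuppOfDigits r) (∑ r', b r' ^ p * monomial (finsuppOfDigits r') 1) =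
      coeff j (b r) ^ p := by
  simp [coeff_nsmul_add_pow_mul_monomial]

theorem isPBasis_prod_X_pow [DecidableEq σ] [PerfectRing R p] :
    IsPBasis p fun r : σ → Fin p => ∏ s, (X s : MvPowerSeries σ R) ^ (r s : ℕ) := by
  have : NeZero p := ⟨expChar_ne_zero R p⟩
  have hmonomial : ∀ r : σ → Fin p,
      ∏ s, (X s : MvPowerSeries σ R) ^ (r s : ℕ) = monomial (finsuppOfDigits r) 1 := by
    intro r
    rw [monomial_one_eq, Finsupp.prod_fintype _ _ (fun _ => pow_zero _)]
    rfl
  simp only [IsPBasis, hmonomial]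
  constructor
  · intro b b' h
    funext r
    ext j
    apply injective_pow_p R p
    dsimp only at h
    rw [← coeff_nsmul_add_sum_pow_mul_monomial p b r j, h,
      coeff_nsmul_add_sum_pow_mul_monomial]
  · intro a
    let b : (σ → Fin p) → MvPowerSeries σ R :=
      fun r j => (frobeniusEquiv R p).symm (coeff (p • j + finsuppOfDigits r) a)
    refine ⟨b, ?_⟩
    ext i
    dsimp only
    obtain ⟨r, j, rfl⟩ := exists_nsmul_add_finsuppOfDigits (p := p) i
    rw [coeff_nsmul_add_sum_pow_mul_monomial]
    exact frobeniusEquiv_symm_pow_p R p _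

end MvPowerSeries

theorem IsPBasis.map_isFractionRing {ι A K : Type*} [Fintype ι] [CommRing A] [Field K]
    [Algebra A K] [IsFractionRing A K] {p : ℕ} (hp : p ≠ 0) {u : ι → A}
    (hu : IsPBasis p u) : IsPBasis p (algebraMap A K ∘ u) := by
  have hscale : ∀ (d : K) (x : ι → K), ∑ r, (d * x r) ^ p * algebraMap A K (u r) =
      d ^ p * ∑ r, x r ^ p * algebraMap A K (u r) := by
    intro d x
    simp only [Finset.mul_sum, mul_pow, mul_assoc]
  constructor
  · intro x y hxy
    dsimp only [Function.comp_apply] at hxy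
    obtain ⟨d, hd⟩ := IsLocalization.exist_integer_multiples (nonZeroDivisors A) Finset.univ
      (Sum.elim x y)
    choose a ha using fun r => hd (Sum.inl r) (Finset.mem_univ _)
    choose a' ha' using fun r => hd (Sum.inr r) (Finset.mem_univ _)
    simp only [Sum.elim_inl, Sum.elim_inr, Algebra.smul_def] at ha ha'
    have hd0 : algebraMap A K d ≠ 0 := (IsLocalization.map_units K d).ne_zero
    have haa' : a = a' := hu.1 <| IsFractionRing.injective A K <| by
      simp only [map_sum, map_mul, map_pow, ha, ha', hscale, hxy]
    funext r
    exact mul_left_cancel₀ hd0 (by rw [← ha, ← ha', haa'])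
  · intro z
    obtain ⟨a, s, hs, rfl⟩ := IsFractionRing.div_surjective (A := A) z
    obtain ⟨b, hb⟩ := hu.2 (a * s ^ (p - 1))
    have hs0 : algebraMap A K s ≠ 0 := (IsLocalization.map_units K ⟨s, hs⟩).ne_zero
    refine ⟨fun r => algebraMap A K (b r) / algebraMap A K s, ?_⟩
    dsimp only [Function.comp_apply]
    simp only [div_eq_mul_inv, mul_comm _ (algebraMap A K s)⁻¹, hscale]
    have hsum : ∑ r, algebraMap A K (b r) ^ p * algebraMap A K (u r) =
        algebraMap A K a * algebraMap A K s ^ (p - 1) := by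
      rw [← map_pow, ← map_mul, ← hb]
      simp only [map_sum, map_mul, map_pow]
    rw [hsum, inv_pow, ← pow_sub_one_mul hp (algebraMap A K s)]
    field_simp

theorem Int.natCast_dvd_mul_add_sub_iff {p : ℕ} (e : ℤ) (j j' : Fin p) :
    (p : ℤ) ∣ p * e + j - j' ↔ j' = j := by
  rw [show (p : ℤ) * e + j - j' = (j - j' : ℤ) + p * e by ring, dvd_add_left (dvd_mul_right _ _)]
  constructor
  · intro h
    have := Int.eq_zero_of_abs_lt_dvd h (by rw [abs_lt]; omega)
    exact Fin.ext (by omega)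
  · rintro rfl
    simp

theorem Int.exists_mul_add_fin (p : ℕ) [NeZero p] (m : ℤ) :
    ∃ (e : ℤ) (j : Fin p), p * e + j = m := by
  have hp : (0 : ℤ) < p := by exact_mod_cast NeZero.pos p
  refine ⟨m / p, ⟨(m % p).toNat, by have := Int.emod_lt_of_pos m hp; omega⟩, ?_⟩
  have := Int.emod_nonneg m hp.ne'
  simp only [Int.toNat_of_nonneg this]
  exact Int.mul_ediv_add_emod m p

namespace LaurentSeries

noncomputable def decimate {R : Type*} [Zero R] (x : LaurentSeries R) (p : ℕ) [NeZero p] (j : ℤ) :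
    LaurentSeries R where
  coeff e := x.coeff (p * e + j)
  isPWO_support' := by
    have hp : (p : ℤ) ≠ 0 := by exact_mod_cast NeZero.ne p
    refine (x.isPWO_support.image_of_monotone (f := fun z : ℤ => (z - j) / p) fun a b hab =>
      Int.ediv_le_ediv (by omega) (by omega)).mono fun e he => ⟨p * e + j, he, ?_⟩
    simp [Int.mul_ediv_cancel_left _ hp]

@[simp]
theorem decimate_coeff {R : Type*} [Zero R] (x : LaurentSeries R) (p : ℕ) [NeZero p] (j e : ℤ) :
    (decimate x p j).coeff e = x.coeff (p * e + j) := rfl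

variable {K : Type*} [Field K] (p : ℕ) [ExpChar K p]

theorem coeff_pow_mul_single (y : LaurentSeries K) (a : K) (e : ℤ) (j j' : Fin p) :
    (y ^ p * HahnSeries.single (j' : ℤ) a).coeff (p * e + j) =
      if j' = j then y.coeff e ^ p * a else 0 := by
  have hp : (p : ℤ) ≠ 0 := by exact_mod_cast expChar_ne_zero K p
  rw [show (p : ℤ) * e + j = (p * e + j - j') + j' by ring, HahnSeries.coeff_mul_single_add,
    coeff_pow_expChar]
  simp only [Int.natCast_dvd_mul_add_sub_iff]
  split_ifs with h
  · subst h
    rw [add_sub_cancel_right, Int.mul_ediv_cancel_left _ hp]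
  · exact zero_mul a

theorem coeff_sum_pow_mul_C_mul_single_pow {ι : Type*} [Fintype ι] (u : ι → K)
    (y : ι × Fin p → LaurentSeries K) (e : ℤ) (j : Fin p) :
    (∑ rj, y rj ^ p * (HahnSeries.C (u rj.1) * HahnSeries.single (1 : ℤ) 1 ^ (rj.2 : ℕ))).coeff
      (p * e + j) = ∑ r, (y (r, j)).coeff e ^ p * u r := by
  simp [Fintype.sum_prod_type, HahnSeries.single_pow, coeff_pow_mul_single]

end LaurentSeries

namespace IsPBasis

variable {ι K : Type*} [Fintype ι] [Field K] {p : ℕ} [ExpChar K p] {u : ι → K}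

theorem laurentSeries (hu : IsPBasis p u) :
    IsPBasis p fun rj : ι × Fin p =>
      HahnSeries.C (u rj.1) * HahnSeries.single (1 : ℤ) (1 : K) ^ (rj.2 : ℕ) := by
  have : NeZero p := ⟨expChar_ne_zero K p⟩
  constructor
  · intro y y' h
    funext ⟨r, j⟩
    ext e
    have hcoeff := congrArg (HahnSeries.coeff · (p * e + j)) h
    simp only [LaurentSeries.coeff_sum_pow_mul_C_mul_single_pow] at hcoeff
    exact congrFun (hu.1 hcoeff) r
  · intro x
    let b := Function.surjInv hu.2
    have hb0 : b 0 = 0 := hu.1 <| by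
      simp [b, Function.surjInv_eq hu.2, zero_pow (expChar_ne_zero K p)]
    refine ⟨fun rj => (LaurentSeries.decimate x p rj.2).map
      (⟨fun a => b a rj.1, by simp [hb0]⟩ : ZeroHom K K), ?_⟩
    ext m
    obtain ⟨e, j, rfl⟩ := Int.exists_mul_add_fin p m
    rw [LaurentSeries.coeff_sum_pow_mul_C_mul_single_pow]
    exact Function.surjInv_eq hu.2 (x.coeff (p * e + j))

theorem mem_span (hu : IsPBasis p u) (a : K) :
    a ∈ Submodule.span (frobenius K p).fieldRange (Set.range u) := by
  obtain ⟨b, rfl⟩ := hu.2 a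
  refine Submodule.sum_mem _ fun r _ => ?_
  exact Submodule.smul_mem _ (⟨b r ^ p, b r, rfl⟩ : (frobenius K p).fieldRange)
    (Submodule.subset_span ⟨r, rfl⟩)

theorem linearIndependent (hu : IsPBasis p u) :
    LinearIndependent (frobenius K p).fieldRange u := by
  rw [Fintype.linearIndependent_iff]
  intro g hg
  choose x hx using fun r => (RingHom.mem_fieldRange.mp (g r).2)
  have hx0 : x = 0 := hu.1 <| by
    simp only [Pi.zero_apply, zero_pow (expChar_ne_zero K p), zero_mul, Finset.sum_const_zero]
    simpa [Subfield.smul_def, ← hx, frobenius_def] using hg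
  intro r
  ext
  simp [← hx r, hx0]

noncomputable def basis (hu : IsPBasis p u) : Module.Basis ι (frobenius K p).fieldRange K :=
  Module.Basis.mk hu.linearIndependent fun a _ => hu.mem_span a

@[simp]
theorem coe_basis (hu : IsPBasis p u) : ⇑hu.basis = u :=
  Module.Basis.coe_mk _ _

theorem exists_basis_laurentSeries (hu : IsPBasis p u) (c : K) :
    ∃ B : Module.Basis (ι × Fin p) (frobenius (LaurentSeries K) p).fieldRange (LaurentSeries K),
      ∀ rj, B rj = HahnSeries.C (u rj.1) *
        (HahnSeries.C c + HahnSeries.single (1 : ℤ) 1) ^ (rj.2 : ℕ) := by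
  set S := (frobenius (LaurentSeries K) p).fieldRange
  set T : LaurentSeries K := HahnSeries.single (1 : ℤ) 1
  set θ := HahnSeries.C c + T
  let v : ι × Fin p → LaurentSeries K := fun rj => HahnSeries.C (u rj.1) * θ ^ (rj.2 : ℕ)
  let B₀ := hu.laurentSeries.basis
  have hC : ∀ a : K, (HahnSeries.C a : LaurentSeries K) ∈
      Submodule.span S (Set.range fun r => (HahnSeries.C (u r) : LaurentSeries K)) := by
    intro a
    obtain ⟨b, rfl⟩ := hu.2 a
    simp only [map_sum, map_mul, map_pow]
    refine Submodule.sum_mem _ fun r _ => ?_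
    exact Submodule.smul_mem _ (⟨_, HahnSeries.C (b r), rfl⟩ : S) (Submodule.subset_span ⟨r, rfl⟩)
  have hCθ : ∀ (a : K) (i : ℕ), i < p →
      (HahnSeries.C a : LaurentSeries K) * θ ^ i ∈ Submodule.span S (Set.range v) := by
    intro a i hi
    have := Submodule.mem_map_of_mem (f := LinearMap.mulRight S (θ ^ i)) (hC a)
    rw [Submodule.map_span, ← Set.range_comp] at this
    refine Submodule.span_mono ?_ this
    rintro _ ⟨r, rfl⟩
    exact ⟨(r, ⟨i, hi⟩), rfl⟩
  have hspan : ⊤ ≤ Submodule.span S (Set.range v) := by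
    rw [← B₀.span_eq, Submodule.span_le]
    rintro _ ⟨⟨r, j⟩, rfl⟩
    have hT : T = θ + HahnSeries.C (-c) := by simp [θ]
    have hexp : B₀ (r, j) = ∑ i ∈ Finset.range (j + 1),
        HahnSeries.C (u r * (-c) ^ ((j : ℕ) - i) * (j.val.choose i)) * θ ^ i := by
      rw [IsPBasis.coe_basis]
      change HahnSeries.C (u r) * T ^ (j : ℕ) = _
      rw [hT, add_pow, Finset.mul_sum]
      refine Finset.sum_congr rfl fun i _ => ?_
      simp only [map_mul, map_pow, map_natCast]
      ring
    rw [SetLike.mem_coe, hexp]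
    exact Submodule.sum_mem _ fun i hi => hCθ _ i (by
      have := j.isLt; simp only [Finset.mem_range] at hi; omega)
  exact ⟨basisOfTopLeSpanOfCardEqFinrank v hspan (Module.finrank_eq_card_basis B₀).symm,
    fun rj => by rw [coe_basisOfTopLeSpanOfCardEqFinrank]⟩

end IsPBasis

/-- extending the Frobenius `F` of `K = Frac(k[[t_1,…,t_n]])` to `K((T))`
by `F(T) = T^p`, for any power series `f` the family `(t^r (f+T)^s)`,
`(r,s) ∈ {0,…,p-1}^{n+1}`, is a basis of `K((T))` over `K((T))^{⟨p⟩} = F(K((T)))`. -/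
theorem stmt2 (p n : ℕ) [Fact p.Prime] (k : Type*) [Field k] [CharP k p] [PerfectRing k p]
    (F : FractionRing (MvPowerSeries (Fin n) k) →+* FractionRing (MvPowerSeries (Fin n) k))
    (hF : ∀ g : MvPowerSeries (Fin n) k,
      F (algebraMap (MvPowerSeries (Fin n) k) (FractionRing (MvPowerSeries (Fin n) k)) g)
        = algebraMap (MvPowerSeries (Fin n) k) (FractionRing (MvPowerSeries (Fin n) k))
            (frobMv p g))
    (F₂ : LaurentSeries (FractionRing (MvPowerSeries (Fin n) k)) →+*
          LaurentSeries (FractionRing (MvPowerSeries (Fin n) k)))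
    (hF₂ : ∀ (x : LaurentSeries (FractionRing (MvPowerSeries (Fin n) k))) (m : ℤ),
      (F₂ x).coeff m = if (p : ℤ) ∣ m then F (x.coeff (m / p)) else 0)
    (f : MvPowerSeries (Fin n) k) :
    ∃ B : Module.Basis ((Fin n → Fin p) × Fin p) F₂.fieldRange
        (LaurentSeries (FractionRing (MvPowerSeries (Fin n) k))),
      ∀ rs : (Fin n → Fin p) × Fin p,
        B rs = HahnSeries.C (∏ i : Fin n,
            (algebraMap (MvPowerSeries (Fin n) k) (FractionRing (MvPowerSeries (Fin n) k))
              (MvPowerSeries.X i)) ^ ((rs.1 i : ℕ)))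
          * (HahnSeries.C (algebraMap (MvPowerSeries (Fin n) k)
                (FractionRing (MvPowerSeries (Fin n) k)) f)
             + HahnSeries.single (1 : ℤ) 1) ^ ((rs.2 : ℕ)) := by
  have : ExpChar (FractionRing (MvPowerSeries (Fin n) k)) p :=
    expChar_of_injective_algebraMap (FaithfulSMul.algebraMap_injective k _) p
  have hF_eq : F = frobenius _ p :=
    IsLocalization.ringHom_ext (nonZeroDivisors (MvPowerSeries (Fin n) k)) <|
      RingHom.ext fun g => by simp [hF, frobMv_eq_pow, frobenius_def]
  have hF₂_eq : F₂ = frobenius _ p := RingHom.ext fun x => HahnSeries.ext <| funext fun m => by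
    rw [hF₂, hF_eq, frobenius_def, frobenius_def, LaurentSeries.coeff_pow_expChar]
  subst hF₂_eq
  obtain ⟨B, hB⟩ := ((MvPowerSeries.isPBasis_prod_X_pow (σ := Fin n) (R := k) p).map_isFractionRing
    (K := FractionRing (MvPowerSeries (Fin n) k)) (expChar_ne_zero k p)).exists_basis_laurentSeries
    (algebraMap _ _ f)
  exact ⟨B, fun rs => by rw [hB]; simp [map_prod, map_pow]⟩
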